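/- Let r₂ = (w⁽¹⁾)² − (9/4)ℓ⁽⁰⁾(ℓ⁽¹⁾)² ∈ P. Then r₂³ lies in the ideal I generated by {f⁽ⁱ⁾ : i ≥ 0}, where f⁽ⁱ⁾ = Dⁱ((w⁽⁰⁾)² − (ℓ⁽⁰⁾)³). -/
import Mathlib


open MvPolynomial

noncomputable section

/-- The polynomial ring `P = ℂ[ℓ⁽⁰⁾, ℓ⁽¹⁾, …, w⁽⁰⁾, w⁽¹⁾, …]`:
variables are indexed by `Fin 2 × ℕ`, where `(0, i)` is `ℓ⁽ⁱ⁾` and `(1, i)` is `w⁽ⁱ⁾`. -/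
abbrev P : Type := MvPolynomial (Fin 2 × ℕ) ℂ

/-- The unique ℂ-linear derivation `D : P → P` with `D(ℓ⁽ⁱ⁾) = ℓ⁽ⁱ⁺¹⁾`, `D(w⁽ⁱ⁾) = w⁽ⁱ⁺¹⁾`. -/
def D : Derivation ℂ P P :=
  MvPolynomial.mkDerivation ℂ (fun p : Fin 2 × ℕ => (X (p.1, p.2 + 1) : P))

/-- `ℓ⁽ⁱ⁾` -/
def lv (i : ℕ) : P := X (0, i)

/-- `w⁽ⁱ⁾` -/
def wv (i : ℕ) : P := X (1, i)

/-- `f = (w⁽⁰⁾)² − (ℓ⁽⁰⁾)³`. -/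
def f : P := wv 0 ^ 2 - lv 0 ^ 3

/-- `f⁽ⁱ⁾ = Dⁱ(f)`. -/
def fd (i : ℕ) : P := (⇑D)^[i] f

/-- The ideal `I` generated by all `f⁽ⁱ⁾`, `i ≥ 0`. -/
def I : Ideal P := Ideal.span (Set.range fd)

/-- `r₂ = (w⁽¹⁾)² − (9/4)ℓ⁽⁰⁾(ℓ⁽¹⁾)²`. -/
def r₂ : P := wv 1 ^ 2 - C ((9 : ℂ)/4) * lv 0 * lv 1 ^ 2

lemma D_lv (i : ℕ) : D (lv i) = lv (i + 1) := by
  simp [D, lv, MvPolynomial.mkDerivation_X]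

lemma D_wv (i : ℕ) : D (wv i) = wv (i + 1) := by
  simp [D, wv, MvPolynomial.mkDerivation_X]

lemma D_ofNat (n : ℕ) [n.AtLeastTwo] : D (no_index (OfNat.ofNat n) : P) = 0 := by
  have h := Derivation.map_natCast D n
  exact h

lemma fd0 : fd 0 = wv 0 ^ 2 - lv 0 ^ 3 := rfl

lemma fd1 : fd 1 = 2 * wv 0 * wv 1 - 3 * lv 0 ^ 2 * lv 1 := by
  have : fd 1 = D (fd 0) := by
    simp [fd, Function.iterate_succ_apply']
  rw [this, fd0, map_sub, Derivation.leibniz_pow, Derivation.leibniz_pow,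
    D_lv, D_wv]
  simp only [smul_eq_mul, nsmul_eq_mul]
  push_cast
  ring

lemma fd2 : fd 2 = 2 * wv 1 ^ 2 + 2 * wv 0 * wv 2
    - 6 * lv 0 * lv 1 ^ 2 - 3 * lv 0 ^ 2 * lv 2 := by
  have : fd 2 = D (fd 1) := by
    simp [fd, Function.iterate_succ_apply']
  rw [this, fd1, map_sub]
  simp only [Derivation.leibniz, Derivation.leibniz_pow, D_lv, D_wv, map_mul,
    Derivation.map_natCast, D_ofNat, smul_eq_mul, nsmul_eq_mul]
  simp only [D_ofNat, Derivation.map_natCast, mul_zero, zero_mul, add_zero, zero_add, sub_zero]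
  push_cast
  ring

lemma fd3 : fd 3 = 6 * wv 1 * wv 2 + 2 * wv 0 * wv 3
    - 6 * lv 1 ^ 3 - 18 * lv 0 * lv 1 * lv 2 - 3 * lv 0 ^ 2 * lv 3 := by
  have : fd 3 = D (fd 2) := by
    simp [fd, Function.iterate_succ_apply']
  rw [this, fd2]
  simp only [map_add, map_sub, Derivation.leibniz, Derivation.leibniz_pow,
    D_lv, D_wv, map_mul, Derivation.map_natCast, D_ofNat, smul_eq_mul, nsmul_eq_mul]
  simp only [D_ofNat, Derivation.map_natCast, mul_zero, zero_mul, add_zero, zero_add, sub_zero]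
  push_cast
  ring

lemma fd_mem (i : ℕ) : fd i ∈ I :=
  Ideal.subset_span ⟨i, rfl⟩

set_option maxHeartbeats 1000000 in
theorem r₂_cubed_mem : r₂ ^ 3 ∈ I := by
  have key : 2 * (4 * wv 1 ^ 2 - 9 * lv 0 * lv 1 ^ 2) ^ 3 =
      ((-432) * lv 1 * lv 2 ^ 2 * wv 0 * wv 1 + (54) * lv 1 ^ 2 * lv 3 * wv 0 * wv 1 + (360) * lv 1 ^ 2 * lv 2 * wv 1 ^ 2 + (432) * lv 1 ^ 2 * lv 2 * wv 0 * wv 2 + (-90) * lv 1 ^ 3 * wv 1 * wv 2 + (-54) * lv 1 ^ 3 * wv 0 * wv 3 + (162) * lv 1 ^ 6 + (-288) * lv 0 * lv 2 ^ 2 * wv 1 ^ 2 + (36) * lv 0 * lv 1 * lv 3 * wv 1 ^ 2 + (468) * lv 0 * lv 1 * lv 2 * wv 1 * wv 2 + (-180) * lv 0 * lv 1 ^ 2 * wv 2 ^ 2 + (-36) * lv 0 * lv 1 ^ 2 * wv 1 * wv 3 + (-810) * lv 0 * lv 1 ^ 4 * lv 2) * fd 0 +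
      ((40) * wv 0 * wv 1 * wv 2 ^ 2 + (8) * wv 0 * wv 1 ^ 2 * wv 3 + (216) * lv 1 * lv 2 ^ 2 * wv 0 ^ 2 + (-27) * lv 1 ^ 2 * lv 3 * wv 0 ^ 2 + (36) * lv 1 ^ 2 * lv 2 * wv 0 * wv 1 + (-168) * lv 1 ^ 3 * wv 1 ^ 2 + (-180) * lv 1 ^ 3 * wv 0 * wv 2 + (144) * lv 0 * lv 2 ^ 2 * wv 0 * wv 1 + (-18) * lv 0 * lv 1 * lv 3 * wv 0 * wv 1 + (-72) * lv 0 * lv 1 * lv 2 * wv 1 ^ 2 + (-234) * lv 0 * lv 1 * lv 2 * wv 0 * wv 2 + (30) * lv 0 * lv 1 ^ 2 * wv 1 * wv 2 + (18) * lv 0 * lv 1 ^ 2 * wv 0 * wv 3 + (432) * lv 0 * lv 1 ^ 5 + (-12) * lv 0 ^ 2 * lv 3 * wv 1 ^ 2 + (-156) * lv 0 ^ 2 * lv 2 * wv 1 * wv 2 + (60) * lv 0 ^ 2 * lv 1 * wv 2 ^ 2 + (12) * lv 0 ^ 2 * lv 1 * wv 1 * wv 3 + (270) * lv 0 ^ 2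 * lv 1 ^ 3 * lv 2) * fd 1 +
      ((64) * wv 1 ^ 4 + (-40) * wv 0 * wv 1 ^ 2 * wv 2 + (-216) * lv 1 ^ 2 * lv 2 * wv 0 ^ 2 + (144) * lv 1 ^ 3 * wv 0 * wv 1 + (-240) * lv 0 * lv 1 ^ 2 * wv 1 ^ 2 + (90) * lv 0 * lv 1 ^ 2 * wv 0 * wv 2 + (96) * lv 0 ^ 2 * lv 2 * wv 1 ^ 2) * fd 2 +
      ((-8) * wv 0 * wv 1 ^ 3 + (27) * lv 1 ^ 3 * wv 0 ^ 2) * fd 3 := by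
    rw [fd0, fd1, fd2, fd3]
    ring
  have hmem : 2 * (4 * wv 1 ^ 2 - 9 * lv 0 * lv 1 ^ 2) ^ 3 ∈ I := by
    rw [key]
    exact add_mem (add_mem (add_mem (Ideal.mul_mem_left _ _ (fd_mem 0))
      (Ideal.mul_mem_left _ _ (fd_mem 1))) (Ideal.mul_mem_left _ _ (fd_mem 2)))
      (Ideal.mul_mem_left _ _ (fd_mem 3))
  have hC : (4 : P) * wv 1 ^ 2 - 9 * lv 0 * lv 1 ^ 2 = C (4 : ℂ) * r₂ := by
    rw [r₂, show ((4 : P) = C (4 : ℂ)) from (map_ofNat _ 4).symm,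
      show ((9 : P) = C (9 : ℂ)) from (map_ofNat _ 9).symm]
    have h94 : (C (4 : ℂ) : P) * C ((9 : ℂ)/4) = C (9 : ℂ) := by
      rw [← map_mul]; norm_num
    linear_combination (lv 0 * lv 1 ^ 2) * h94
  rw [hC] at hmem
  have hunit : (C ((1 : ℂ)/128) : P) * (C (2 : ℂ) * (C (4 : ℂ)) ^ 3) = 1 := by
    rw [← map_pow, ← map_mul, ← map_mul]
    norm_num
  have hfinal : r₂ ^ 3 = C ((1 : ℂ)/128) * (2 * (C (4 : ℂ) * r₂) ^ 3) := by
    rw [show ((2 : P) = C (2 : ℂ)) from (map_ofNat _ 2).symm]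
    linear_combination (- (r₂ ^ 3)) * hunit
  rw [hfinal]
  exact Ideal.mul_mem_left _ _ hmem
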